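/- Let p : [n]^k → Γ_k be a safe PI function and x ∈ [n]^k, i ∈ [k]. (a) If p(x)_i ∈ {0,1}, then the open box B^in(x, a_i⁺) = {y : y_i < x_i and y_j > x_j for all j ≠ i} is disjoint from Cand⁺(p). (b) If p(x)_i ∈ {−1,0}, then B^in(x, a_i⁻) = {y : y_i > x_i and y_j < x_j for all j ≠ i} is disjoint from Cand⁺(p). (c) If p(x)_i = −1, then the closed box B(x, a_i⁻) = {y : y_i ≥ x_i and y_j ≤ x_j for all j ≠ i} is disjoint from Cand⁺(p). -/
import Mathlib


/-- Symbols of the partial-information alphabet: −1, 0, 1, ≤, ≥, ◇. -/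
inductive PISym : Type where
  | neg | zero | pos | sle | sge | dia
deriving DecidableEq

/-- Points of the `k`-dimensional grid, as integer vectors. -/
abbrev Pt (k : ℕ) := Fin k → ℤ

/-- `x ∈ [n]^k`. -/
def inGrid (n k : ℕ) (x : Pt k) : Prop := ∀ i, 1 ≤ x i ∧ x i ≤ (n : ℤ)

/-- The `i`-th standard unit vector. -/
def eVec (k : ℕ) (i : Fin k) : Pt k := fun j => if j = i then 1 else 0

/-- A slice of `[n]^k`: `none` marks a free coordinate. -/
abbrev Slice (k : ℕ) := Fin k → Option ℤ

def fullSlice (k : ℕ) : Slice k := fun _ => none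

def validSlice (n : ℕ) {k : ℕ} (s : Slice k) : Prop :=
  ∀ i v, s i = some v → 1 ≤ v ∧ v ≤ (n : ℤ)

def inSlice {k : ℕ} (s : Slice k) (x : Pt k) : Prop :=
  ∀ i v, s i = some v → x i = v

/-- Monotone partial-information function (Definition 2.4). -/
def MonoPI (n k : ℕ) (p1 : Pt k → Fin k → PISym) (p2 : Pt k → PISym) : Prop :=
  (∀ x, inGrid n k x → p2 x = PISym.pos ∨ p2 x = PISym.neg ∨ p2 x = PISym.dia) ∧
  (∀ x y, inGrid n k x → inGrid n k y → ∀ i : Fin k,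
    (p1 x i = PISym.pos → x ≤ y → y i = x i →
      p1 y i = PISym.pos ∧
        (y i < (n : ℤ) → p1 (y + eVec k i) i ∈ ({PISym.pos, PISym.zero, PISym.sge} : Set PISym))) ∧
    (p1 x i = PISym.neg → y ≤ x → y i = x i →
      p1 y i = PISym.neg ∧
        (1 < y i → p1 (y - eVec k i) i ∈ ({PISym.neg, PISym.zero, PISym.sle} : Set PISym))) ∧
    (p1 x i = PISym.zero → y ≤ x → y i = x i →
      p1 y i ∈ ({PISym.zero, PISym.neg, PISym.sle} : Set PISym)) ∧
    (p1 x i = PISym.zero → x ≤ y → y i = x i →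
      p1 y i ∈ ({PISym.zero, PISym.pos, PISym.sge} : Set PISym)) ∧
    (p1 x i = PISym.sle → y ≤ x → y i = x i → p1 y i ∈ ({PISym.neg, PISym.sle} : Set PISym)) ∧
    (p1 x i = PISym.sge → x ≤ y → y i = x i → p1 y i ∈ ({PISym.pos, PISym.sge} : Set PISym))) ∧
  (∀ x, inGrid n k x → ∀ i : Fin k,
    (x i = 1 → p1 x i ∈ ({PISym.zero, PISym.pos, PISym.sge} : Set PISym)) ∧
    (x i = (n : ℤ) → p1 x i ∈ ({PISym.zero, PISym.neg, PISym.sle} : Set PISym))) ∧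
  (∀ x y, inGrid n k x → inGrid n k y → x ≤ y →
    (p2 x = PISym.pos → p2 y = PISym.pos) ∧ (p2 y = PISym.neg → p2 x = PISym.neg))

/-- Postfixed points of a PI function on a slice. -/
def Post (n k : ℕ) (p1 : Pt k → Fin k → PISym) (s : Slice k) : Set (Pt k) :=
  {x | inGrid n k x ∧ inSlice s x ∧
       ∀ i, s i = none → p1 x i ∈ ({PISym.pos, PISym.zero, PISym.sge} : Set PISym)}

/-- Prefixed points of a PI function on a slice. -/
def Pre (n k : ℕ) (p1 : Pt k → Fin k → PISym) (s : Slice k) : Set (Pt k) :=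
  {x | inGrid n k x ∧ inSlice s x ∧
       ∀ i, s i = none → p1 x i ∈ ({PISym.neg, PISym.zero, PISym.sle} : Set PISym)}

/-- Safe PI functions (Definition 2.8). -/
def SafePI (n k : ℕ) (p1 : Pt k → Fin k → PISym) (p2 : Pt k → PISym) : Prop :=
  MonoPI n k p1 p2 ∧
  ∀ s : Slice k, validSlice n s →
    (∀ J, IsGreatest (Post n k p1 s) J →
      ∀ x, inGrid n k x → inSlice s x → x ≤ J → x ≠ J →
        (∀ i, s i = none → x i < J i →
          p1 x i ∈ ({PISym.neg, PISym.zero, PISym.pos} : Set PISym)) ∧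
        (∃ i, s i = none ∧ x i < J i ∧ p1 x i = PISym.pos)) ∧
    (∀ M, IsLeast (Pre n k p1 s) M →
      ∀ x, inGrid n k x → inSlice s x → M ≤ x → x ≠ M →
        (∀ i, s i = none → M i < x i →
          p1 x i ∈ ({PISym.neg, PISym.zero, PISym.pos} : Set PISym)) ∧
        (∃ i, s i = none ∧ M i < x i ∧ p1 x i = PISym.neg))

/-- `x^{−i}` for `i ∈ [k]`. -/
def dminus {k : ℕ} (i : Fin k) (x : Pt k) : Pt k :=
  fun j => if j ≠ i ∧ 1 < x j then x j - 1 else x j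

/-- `x^{−(k+1)}`. -/
def dminusAll {k : ℕ} (x : Pt k) : Pt k :=
  fun j => if 1 < x j then x j - 1 else x j

/-- `x^{+i}` for `i ∈ [k]`. -/
def dplus (n : ℕ) {k : ℕ} (i : Fin k) (x : Pt k) : Pt k :=
  fun j => if j ≠ i ∧ x j < (n : ℤ) then x j + 1 else x j

/-- `x^{+(k+1)}`. -/
def dplusAll (n : ℕ) {k : ℕ} (x : Pt k) : Pt k :=
  fun j => if x j < (n : ℤ) then x j + 1 else x j

def IntPlus {k : ℕ} (p1 : Pt k → Fin k → PISym) (i : Fin k) : Set (Pt k) :=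
  {x | p1 (dminus i x) i = PISym.pos}

def IntPlusLast {k : ℕ} (p1 : Pt k → Fin k → PISym) (p2 : Pt k → PISym) : Set (Pt k) :=
  {x | p2 (dminusAll x) = PISym.pos ∨
    ∃ i, p1 (dminus i x) i ∈ ({PISym.pos, PISym.zero, PISym.sge} : Set PISym) ∧
         p2 (dminus i x) = PISym.pos}

def IntMinus (n : ℕ) {k : ℕ} (p1 : Pt k → Fin k → PISym) (i : Fin k) : Set (Pt k) :=
  {x | p1 (dplus n i x) i = PISym.neg}

def IntMinusLast (n : ℕ) {k : ℕ} (p1 : Pt k → Fin k → PISym) (p2 : Pt k → PISym) : Set (Pt k) :=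
  {x | p2 (dplusAll n x) = PISym.neg ∨
    ∃ i, p1 (dplus n i x) i ∈ ({PISym.neg, PISym.zero, PISym.sle} : Set PISym) ∧
         p2 (dplus n i x) = PISym.neg}

/-- `Cand⁺(p)` relative to `J = J(p)` and `M = M(p)`. -/
def CandPlus (n k : ℕ) (p1 : Pt k → Fin k → PISym) (p2 : Pt k → PISym) (J M : Pt k) :
    Set (Pt k) :=
  {x | inGrid n k x ∧ J ≤ x ∧ x ≤ M ∧
    (∀ i, p1 x i ≠ PISym.neg ∧ x ∉ IntPlus p1 i) ∧
    p2 x ≠ PISym.neg ∧ x ∉ IntPlusLast p1 p2}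

/-- `Cand⁻(p)` relative to `J = J(p)` and `M = M(p)`. -/
def CandMinus (n k : ℕ) (p1 : Pt k → Fin k → PISym) (p2 : Pt k → PISym) (J M : Pt k) :
    Set (Pt k) :=
  {x | inGrid n k x ∧ J ≤ x ∧ x ≤ M ∧
    (∀ i, p1 x i ≠ PISym.pos ∧ x ∉ IntMinus n p1 i) ∧
    p2 x ≠ PISym.pos ∧ x ∉ IntMinusLast n p1 p2}

/-- The information partial order on symbols: `symDom a b` means `a ⇒ b`. -/
def symDom (a b : PISym) : Prop :=
  b = PISym.dia ∨ a = b ∨ (a = PISym.pos ∧ b = PISym.sge) ∨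
  (a = PISym.zero ∧ (b = PISym.sge ∨ b = PISym.sle)) ∨ (a = PISym.neg ∧ b = PISym.sle)

/-- `p ⇒ p'`: `p` dominates (is more informative than) `p'`. -/
def PIdom (n k : ℕ) (p1 : Pt k → Fin k → PISym) (p2 : Pt k → PISym)
    (q1 : Pt k → Fin k → PISym) (q2 : Pt k → PISym) : Prop :=
  ∀ x, inGrid n k x → (∀ i, symDom (p1 x i) (q1 x i)) ∧ symDom (p2 x) (q2 x)

/-- A sign value `a ∈ {−1,0,1}` is consistent with a symbol `b`. -/
def consS (a : ℤ) (b : PISym) : Prop :=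
  match b with
  | PISym.dia => True
  | PISym.pos => a = 1
  | PISym.neg => a = -1
  | PISym.zero => a = 0
  | PISym.sge => a = 0 ∨ a = 1
  | PISym.sle => a = -1 ∨ a = 0

/-- A sign function `f` is consistent with the PI function `p` (i.e., `f ⇒ p`). -/
def SignCons (n k : ℕ) (f1 : Pt k → Pt k) (f2 : Pt k → ℤ)
    (p1 : Pt k → Fin k → PISym) (p2 : Pt k → PISym) : Prop :=
  ∀ x, inGrid n k x → (∀ i, consS (f1 x i) (p1 x i)) ∧ consS (f2 x) (p2 x)

/-- Monotone sign function: `x ↦ (x + f1 x, f2 x)` is well defined and monotone. -/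
def MonoSign (n k : ℕ) (f1 : Pt k → Pt k) (f2 : Pt k → ℤ) : Prop :=
  (∀ x, inGrid n k x →
    (∀ i, f1 x i = -1 ∨ f1 x i = 0 ∨ f1 x i = 1) ∧ (f2 x = 1 ∨ f2 x = -1)) ∧
  (∀ x, inGrid n k x → inGrid n k (x + f1 x)) ∧
  (∀ a b, inGrid n k a → inGrid n k b → a ≤ b → a + f1 a ≤ b + f1 b ∧ f2 a ≤ f2 b)

def PostF (n k : ℕ) (f1 : Pt k → Pt k) (s : Slice k) : Set (Pt k) :=
  {x | inGrid n k x ∧ inSlice s x ∧ ∀ i, s i = none → 0 ≤ f1 x i}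

def PreF (n k : ℕ) (f1 : Pt k → Pt k) (s : Slice k) : Set (Pt k) :=
  {x | inGrid n k x ∧ inSlice s x ∧ ∀ i, s i = none → f1 x i ≤ 0}

/-- Safe sign functions (conditions (1') and (2') of Definition 2.8). -/
def SafeSign (n k : ℕ) (f1 : Pt k → Pt k) (f2 : Pt k → ℤ) : Prop :=
  MonoSign n k f1 f2 ∧
  ∀ s : Slice k, validSlice n s →
    (∀ J, IsGreatest (PostF n k f1 s) J →
      ∀ x, inGrid n k x → inSlice s x → x ≤ J → x ≠ J →
        ∃ i, s i = none ∧ x i < J i ∧ f1 x i = 1) ∧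
    (∀ M, IsLeast (PreF n k f1 s) M →
      ∀ x, inGrid n k x → inSlice s x → M ≤ x → x ≠ M →
        ∃ i, s i = none ∧ M i < x i ∧ f1 x i = -1)

/-- The revealed solutions of a PI function. -/
def SolPI (n k : ℕ) (p1 : Pt k → Fin k → PISym) (p2 : Pt k → PISym) : Set (Pt k) :=
  {x | inGrid n k x ∧
    (((∀ i, p1 x i ∈ ({PISym.pos, PISym.zero, PISym.sge} : Set PISym)) ∧ p2 x = PISym.pos) ∨
     ((∀ i, p1 x i ∈ ({PISym.neg, PISym.zero, PISym.sle} : Set PISym)) ∧ p2 x = PISym.neg))}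

/-- `x ≪_s y` : `x ⪯ y` with strict inequality in every free coordinate of `s`. -/
def lls {k : ℕ} (s : Slice k) (x y : Pt k) : Prop :=
  x ≤ y ∧ ∀ i, s i = none → x i < y i

/-- `s` is a slice witnessing `ŝ(x,p) ≠ nil`: `x ∈ L_s` and `x ≪_s J_s(p)`. -/
def HasSlice (n k : ℕ) (p1 : Pt k → Fin k → PISym) (x : Pt k) (s : Slice k) : Prop :=
  validSlice n s ∧ inSlice s x ∧ ∃ J, IsGreatest (Post n k p1 s) J ∧ lls s x J

/-- `s = ŝ(x,p)`: `s` is the maximal slice with `x ∈ L_s` and `x ≪_s J_s(p)`. -/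
def MaxSlice (n k : ℕ) (p1 : Pt k → Fin k → PISym) (x : Pt k) (s : Slice k) : Prop :=
  HasSlice n k p1 x s ∧
  ∀ s', HasSlice n k p1 x s' → ∀ i, s' i = none → s i = none

section Aux

variable {k : ℕ}

lemma aux_slice_eq (i : Fin k) (z w : Pt k)
    (h : ∀ j, j ≠ i → w j = z j) : w = Function.update z i (w i) := by
  funext j
  by_cases hj : j = i
  · subst hj; simp
  · rw [Function.update_of_ne hj]; exact h j hj

lemma aux_exists_greatest_post (n : ℕ) (p1 : Pt k → Fin k → PISym) (i : Fin k) (z : Pt k)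
    (hz : z ∈ Post n k p1 (fun j => if j = i then none else some (z j))) :
    ∃ Js, IsGreatest (Post n k p1 (fun j => if j = i then none else some (z j))) Js ∧
      z ≤ Js := by
  set s : Slice k := fun j => if j = i then none else some (z j) with hs
  have hbdd : ∃ b : ℤ, ∀ v : ℤ, Function.update z i v ∈ Post n k p1 s → v ≤ b := by
    refine ⟨(n : ℤ), fun v hv => ?_⟩
    have := (hv.1 i).2
    simpa using this
  have hinh : ∃ v : ℤ, Function.update z i v ∈ Post n k p1 s := by
    refine ⟨z i, ?_⟩
    simpa [Function.update_eq_self] using hz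
  obtain ⟨v, hvmem, hvmax⟩ := Int.exists_greatest_of_bdd hbdd hinh
  refine ⟨Function.update z i v, ⟨hvmem, fun w hw => ?_⟩, fun j => ?_⟩
  · have hwz : ∀ j, j ≠ i → w j = z j := by
      intro j hj
      exact hw.2.1 j (z j) (by simp [hs, hj])
    have hwe : w = Function.update z i (w i) := aux_slice_eq i z w hwz
    have hwi : w i ≤ v := hvmax (w i) (by rwa [← hwe])
    intro j
    by_cases hj : j = i
    · subst hj; simpa using hwi
    · rw [hwe]; simp [Function.update_of_ne hj]
  · by_cases hj : j = i
    · subst hj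
      have := hvmax (z j) (by simpa [Function.update_eq_self] using hz)
      simpa using this
    · simp [Function.update_of_ne hj]

lemma aux_exists_least_pre (n : ℕ) (p1 : Pt k → Fin k → PISym) (i : Fin k) (z : Pt k)
    (hz : z ∈ Pre n k p1 (fun j => if j = i then none else some (z j))) :
    ∃ Ms, IsLeast (Pre n k p1 (fun j => if j = i then none else some (z j))) Ms ∧
      Ms ≤ z := by
  set s : Slice k := fun j => if j = i then none else some (z j) with hs
  have hbdd : ∃ b : ℤ, ∀ v : ℤ, Function.update z i v ∈ Pre n k p1 s → b ≤ v := by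
    refine ⟨(1 : ℤ), fun v hv => ?_⟩
    have := (hv.1 i).1
    simpa using this
  have hinh : ∃ v : ℤ, Function.update z i v ∈ Pre n k p1 s := by
    refine ⟨z i, ?_⟩
    simpa [Function.update_eq_self] using hz
  obtain ⟨v, hvmem, hvmin⟩ := Int.exists_least_of_bdd hbdd hinh
  refine ⟨Function.update z i v, ⟨hvmem, fun w hw => ?_⟩, fun j => ?_⟩
  · have hwz : ∀ j, j ≠ i → w j = z j := by
      intro j hj
      exact hw.2.1 j (z j) (by simp [hs, hj])
    have hwe : w = Function.update z i (w i) := aux_slice_eq i z w hwz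
    have hwi : v ≤ w i := hvmin (w i) (by rwa [← hwe])
    intro j
    by_cases hj : j = i
    · subst hj; simpa using hwi
    · rw [hwe]; simp [Function.update_of_ne hj]
  · by_cases hj : j = i
    · subst hj
      have := hvmin (z j) (by simpa [Function.update_eq_self] using hz)
      simpa using this
    · simp [Function.update_of_ne hj]

end Aux

/-- Lemma 6.4(1): orthant-deletion properties of safe PI functions in the first
`k` coordinates. -/
theorem stmt15 (n k : ℕ) (p1 : Pt k → Fin k → PISym) (p2 : Pt k → PISym)
    (hp : SafePI n k p1 p2)
    (J M : Pt k)
    (hJ : IsGreatest (Post n k p1 (fullSlice k)) J)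
    (hM : IsLeast (Pre n k p1 (fullSlice k)) M)
    (x : Pt k) (hx : inGrid n k x) (i : Fin k) :
    ((p1 x i = PISym.zero ∨ p1 x i = PISym.pos) →
      ∀ y, inGrid n k y → y i < x i → (∀ j, j ≠ i → x j < y j) →
        y ∉ CandPlus n k p1 p2 J M) ∧
    ((p1 x i = PISym.neg ∨ p1 x i = PISym.zero) →
      ∀ y, inGrid n k y → x i < y i → (∀ j, j ≠ i → y j < x j) →
        y ∉ CandPlus n k p1 p2 J M) ∧
    (p1 x i = PISym.neg →
      ∀ y, inGrid n k y → x i ≤ y i → (∀ j, j ≠ i → y j ≤ x j) →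
        y ∉ CandPlus n k p1 p2 J M) := by
  obtain ⟨hmono, hsafe⟩ := hp
  obtain ⟨_, hm, _, _⟩ := hmono
  -- common lemma for the downward (neg) direction with strict gap in coord i
  have negCase : ∀ y, inGrid n k y →
      (p1 x i = PISym.neg ∨ p1 x i = PISym.zero) → x i < y i →
      (∀ j, j ≠ i → y j ≤ x j) → y ∉ CandPlus n k p1 p2 J M := by
    intro y hy hpi hyi hyj hmem
    obtain ⟨_, _, _, h4, _, _⟩ := hmem
    set z : Pt k := Function.update y i (x i) with hzdef
    have hzj : ∀ j, j ≠ i → z j = y j := by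
      intro j hj; simp [hzdef, Function.update_of_ne hj]
    have hzi : z i = x i := by simp [hzdef]
    have hzg : inGrid n k z := by
      intro j
      by_cases hj : j = i
      · subst hj; rw [hzi]; exact hx j
      · rw [hzj j hj]; exact hy j
    have hzx : z ≤ x := by
      intro j
      by_cases hj : j = i
      · subst hj; rw [hzi]
      · rw [hzj j hj]; exact hyj j hj
    have hzsym : p1 z i ∈ ({PISym.neg, PISym.zero, PISym.sle} : Set PISym) := by
      rcases hpi with hpi | hpi
      · have := ((hm x z hx hzg i).2.1 hpi hzx hzi).1
        simp [this]
      · have h := (hm x z hx hzg i).2.2.1 hpi hzx hzi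
        simp only [Set.mem_insert_iff, Set.mem_singleton_iff] at h ⊢
        tauto
    set s : Slice k := fun j => if j = i then none else some (z j) with hs
    have hvs : validSlice n s := by
      intro j v hjv
      by_cases hj : j = i
      · simp [hs, hj] at hjv
      · simp [hs, hj] at hjv; subst hjv; exact hzg j
    have hzpre : z ∈ Pre n k p1 s := by
      refine ⟨hzg, fun j v hjv => ?_, fun j hj => ?_⟩
      · by_cases hj : j = i
        · simp [hs, hj] at hjv
        · simp [hs, hj] at hjv; omega
      · by_cases hji : j = i
        · subst hji; exact hzsym
        · simp [hs, hji] at hj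
    obtain ⟨Ms, hMs, hMz⟩ := aux_exists_least_pre n p1 i z hzpre
    have hys : inSlice s y := by
      intro j v hjv
      by_cases hj : j = i
      · simp [hs, hj] at hjv
      · simp [hs, hj] at hjv; rw [← hzj j hj]; omega
    have hMy : Ms ≤ y := by
      intro j
      by_cases hj : j = i
      · subst hj
        calc Ms j ≤ z j := hMz j
        _ = x j := hzi
        _ ≤ y j := le_of_lt hyi
      · have : Ms j = z j := hMs.1.2.1 j (z j) (by simp [hs, hj])
        rw [this, hzj j hj]
    have hyne : y ≠ Ms := by
      intro h
      have h1 : Ms i ≤ x i := le_trans (hMz i) (le_of_eq hzi)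
      have h2 : y i = Ms i := by rw [h]
      omega
    obtain ⟨_, i', hi'none, _, hneg⟩ :=
      ((hsafe s hvs).2 Ms hMs y hy hys hMy hyne)
    have hii : i' = i := by
      by_contra hne
      simp [hs, hne] at hi'none
    rw [hii] at hneg
    exact (h4 i).1 hneg
  refine ⟨?_, ?_, ?_⟩
  · -- (a)
    intro hpi y hy hyi hyj hmem
    obtain ⟨_, _, _, h4, _, _⟩ := hmem
    set w : Pt k := dminus i y with hwdef
    have hwi : w i = y i := by simp [hwdef, dminus]
    have hwj : ∀ j, j ≠ i → w j = y j - 1 := by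
      intro j hj
      have h1 : 1 < y j := by have := hx j; have := hyj j hj; omega
      simp [hwdef, dminus, hj, h1]
    have hxw : ∀ j, j ≠ i → x j ≤ w j := by
      intro j hj; rw [hwj j hj]; have := hyj j hj; omega
    have hwg : inGrid n k w := by
      intro j
      by_cases hj : j = i
      · subst hj; rw [hwi]; exact hy j
      · rw [hwj j hj]
        have := hy j; have := hx j; have := hyj j hj; omega
    set z : Pt k := Function.update w i (x i) with hzdef
    have hzj : ∀ j, j ≠ i → z j = w j := by
      intro j hj; simp [hzdef, Function.update_of_ne hj]
    have hzi : z i = x i := by simp [hzdef]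
    have hzg : inGrid n k z := by
      intro j
      by_cases hj : j = i
      · subst hj; rw [hzi]; exact hx j
      · rw [hzj j hj]; exact hwg j
    have hxz : x ≤ z := by
      intro j
      by_cases hj : j = i
      · subst hj; rw [hzi]
      · rw [hzj j hj]; exact hxw j hj
    have hzsym : p1 z i ∈ ({PISym.pos, PISym.zero, PISym.sge} : Set PISym) := by
      rcases hpi with hpi | hpi
      · have := (hm x z hx hzg i).2.2.2.1 hpi hxz hzi
        simp only [Set.mem_insert_iff, Set.mem_singleton_iff] at this ⊢
        tauto
      · have := ((hm x z hx hzg i).1 hpi hxz hzi).1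
        simp [this]
    set s : Slice k := fun j => if j = i then none else some (z j) with hs
    have hvs : validSlice n s := by
      intro j v hjv
      by_cases hj : j = i
      · simp [hs, hj] at hjv
      · simp [hs, hj] at hjv; subst hjv; exact hzg j
    have hzpost : z ∈ Post n k p1 s := by
      refine ⟨hzg, fun j v hjv => ?_, fun j hj => ?_⟩
      · by_cases hj : j = i
        · simp [hs, hj] at hjv
        · simp [hs, hj] at hjv; omega
      · by_cases hji : j = i
        · subst hji; exact hzsym
        · simp [hs, hji] at hj
    obtain ⟨Js, hJs, hzJ⟩ := aux_exists_greatest_post n p1 i z hzpost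
    have hws : inSlice s w := by
      intro j v hjv
      by_cases hj : j = i
      · simp [hs, hj] at hjv
      · simp [hs, hj] at hjv; rw [← hzj j hj]; omega
    have hwJ : w ≤ Js := by
      intro j
      by_cases hj : j = i
      · subst hj
        calc w j = y j := hwi
        _ ≤ x j := le_of_lt hyi
        _ = z j := hzi.symm
        _ ≤ Js j := hzJ j
      · rw [← hzj j hj]; exact hzJ j
    have hwne : w ≠ Js := by
      intro h
      have h1 : x i ≤ Js i := le_trans (le_of_eq hzi.symm) (hzJ i)
      have h2 : w i = Js i := by rw [h]
      rw [hwi] at h2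
      omega
    obtain ⟨_, i', hi'none, _, hpos⟩ :=
      ((hsafe s hvs).1 Js hJs w hwg hws hwJ hwne)
    have hii : i' = i := by
      by_contra hne
      simp [hs, hne] at hi'none
    rw [hii] at hpos
    exact (h4 i).2 hpos
  · -- (b)
    intro hpi y hy hyi hyj
    exact negCase y hy hpi hyi (fun j hj => le_of_lt (hyj j hj))
  · -- (c)
    intro hpi y hy hyi hyj hmem
    rcases lt_or_eq_of_le hyi with hlt | heq
    · exact negCase y hy (Or.inl hpi) hlt hyj hmem
    · obtain ⟨_, _, _, h4, _, _⟩ := hmem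
      have hyx : y ≤ x := by
        intro j
        by_cases hj : j = i
        · subst hj; exact le_of_eq heq.symm
        · exact hyj j hj
      have := ((hm x y hx hy i).2.1 hpi hyx heq.symm).1
      exact (h4 i).1 this
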